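/- arXiv:2310.09115 — 2 statements merged into one kernel-verified Lean document; each statement's English description precedes it below -/
import Mathlib

section
/- Let A be an integral NDA, and let ρ¹ = ρ¹₀,…,ρ¹_{n+1} and ρ² = ρ²₀,…,ρ²_{n+1} be two runs of A of length n+1 such that Γ(ρ¹₀,…,ρ¹ₙ) − Γ(ρ²₀,…,ρ²ₙ) > M. Then Γ(ρ¹₀,…,ρ¹_{n+1}) − Γ(ρ²₀,…,ρ²_{n+1}) > Γ(ρ¹₀,…,ρ¹ₙ) − Γ(ρ²₀,…,ρ²ₙ). -/
/-- A nondeterministic integral discounted-sum automaton (NDA) over alphabet `σ`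
with state type `Q`. -/
structure NDA (σ : Type) (Q : Type) where
  init : Set Q
  acc : Set Q
  delta : Set (Q × σ × Q)
  val : Q × σ × Q → ℕ
  fval : Q → ℕ
  lam : ℕ
  one_lt_lam : 1 < lam

namespace NDA

variable {σ Q : Type}

/-- The adjacency (transition) condition for a sequence of states along the word `w`. -/
def Steps (A : NDA σ Q) (w : List σ) (ρ : ℕ → Q) : Prop :=
  ∀ i : Fin w.length, (ρ (i : ℕ), w.get i, ρ ((i : ℕ) + 1)) ∈ A.delta

/-- A run of `A` on `w`: starts in an initial state and follows transitions. -/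
def IsRun (A : NDA σ Q) (w : List σ) (ρ : ℕ → Q) : Prop :=
  ρ 0 ∈ A.init ∧ A.Steps w ρ

/-- A run of `A` on `w` starting in the state `q`. -/
def IsRunFrom (A : NDA σ Q) (q : Q) (w : List σ) (ρ : ℕ → Q) : Prop :=
  ρ 0 = q ∧ A.Steps w ρ

/-- The discounted weight of the sequence of states `ρ` along the word `w`. -/
def runVal (A : NDA σ Q) (w : List σ) (ρ : ℕ → Q) : ℚ :=
  ∑ i : Fin w.length,
    ((A.lam : ℚ)⁻¹) ^ (i : ℕ) * (A.val (ρ (i : ℕ), w.get i, ρ ((i : ℕ) + 1)) : ℚ)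

/-- `A_[P→P'](w)`: minimal weight of a run on `w` from `P` to `P'` (`⊤` if none). -/
noncomputable def minVal (A : NDA σ Q) (P P' : Set Q) (w : List σ) : EReal :=
  sInf {x : EReal | ∃ ρ : ℕ → Q, ρ 0 ∈ P ∧ A.Steps w ρ ∧ ρ w.length ∈ P' ∧
    x = ((A.runVal w ρ : ℝ) : EReal)}

/-- `A_[P→_f P'](w)`: minimal weight including the final weight of an accepting
run on `w` from `P` ending in `P' ∩ α` (`⊤` if none). -/
noncomputable def minValF (A : NDA σ Q) (P P' : Set Q) (w : List σ) : EReal :=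
  sInf {x : EReal | ∃ ρ : ℕ → Q, ρ 0 ∈ P ∧ A.Steps w ρ ∧ ρ w.length ∈ P' ∩ A.acc ∧
    x = (((A.runVal w ρ + ((A.lam : ℚ)⁻¹) ^ w.length * (A.fval (ρ w.length) : ℚ) : ℚ) : ℝ) : EReal)}

/-- `A*(w)`: the value of the word `w`. -/
noncomputable def starVal (A : NDA σ Q) (w : List σ) : EReal :=
  A.minValF A.init Set.univ w

/-- `(w, qu, ql)` is a recoverable gap with respect to `z`. -/
def RecGap (A : NDA σ Q) (w z : List σ) (qu ql : Q) : Prop :=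
  A.minVal A.init {ql} w ≤ A.minVal A.init {qu} w ∧
  A.minVal A.init {qu} w +
      ((((A.lam : ℝ)⁻¹) ^ w.length : ℝ) : EReal) * A.minValF {qu} Set.univ z
    = A.starVal (w ++ z) ∧
  A.starVal (w ++ z) < ⊤

/-- `gap_{qu,ql}(w) = λ^{|w|}·(A_[Q₀→qu](w) − A_[Q₀→ql](w))`: the size of a gap. -/
noncomputable def gapSize (A : NDA σ Q) (w : List σ) (qu ql : Q) : EReal :=
  (((A.lam : ℝ) ^ w.length : ℝ) : EReal) *
    (A.minVal A.init {qu} w - A.minVal A.init {ql} w)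

/-- The set of sizes of recoverable gaps of `A`. -/
def gapSizes (A : NDA σ Q) : Set EReal :=
  {g | ∃ w z qu ql, A.RecGap w z qu ql ∧ g = A.gapSize w qu ql}

/-- `A` is deterministic (a DDA). -/
def Deterministic (A : NDA σ Q) : Prop :=
  (∃! q, q ∈ A.init) ∧ ∀ p s, {q | (p, s, q) ∈ A.delta}.Subsingleton

/-- `A` is determinizable: it has an equivalent DDA over the same alphabet with
the same discounting factor. -/
def Determinizable (A : NDA σ Q) : Prop :=
  ∃ (Q' : Type) (_ : Fintype Q') (D : NDA σ Q'),
    D.Deterministic ∧ D.lam = A.lam ∧ ∀ w : List σ, A.starVal w = D.starVal w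

/-- `m_A`: the maximal transition weight or final weight of `A`. -/
noncomputable def mA (A : NDA σ Q) [Fintype σ] [Fintype Q] : ℕ :=
  max ((Set.toFinite A.delta).toFinset.sup A.val)
      ((Set.toFinite A.acc).toFinset.sup A.fval)

/-- `M = 2·(λ/(λ−1))·m_A`. -/
noncomputable def M (A : NDA σ Q) [Fintype σ] [Fintype Q] : ℚ :=
  2 * ((A.lam : ℚ) / ((A.lam : ℚ) - 1)) * (A.mA : ℚ)

/-- `Γ` of the length-`i` prefix of a run on `w`: `λ^i` times its weight. -/
def gammaPfx (A : NDA σ Q) (w : List σ) (ρ : ℕ → Q) (i : ℕ) : ℚ :=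
  (A.lam : ℚ) ^ i * A.runVal (w.take i) ρ

/-- `𝒩 = λ^{|Q|²·2^{|Q|²}}·((|Q|−2)·M) + M`. -/
noncomputable def calN (A : NDA σ Q) [Fintype σ] [Fintype Q] : ℚ :=
  (A.lam : ℚ) ^ ((Fintype.card Q) ^ 2 * 2 ^ ((Fintype.card Q) ^ 2)) *
      (((Fintype.card Q : ℚ) - 2) * A.M) + A.M

/-- `C = (λ/(λ−1))·(𝒩·|Q| + 2·m_A)`. -/
noncomputable def calC (A : NDA σ Q) [Fintype σ] [Fintype Q] : ℚ :=
  ((A.lam : ℚ) / ((A.lam : ℚ) - 1)) * (A.calN * (Fintype.card Q : ℚ) + 2 * (A.mA : ℚ))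

/-- `w` has the `n`-separation property with respect to `(U, L, qu, z)`. -/
def SepPropWith (A : NDA σ Q) (n : ℚ) (w : List σ) (U L : Set Q) (qu : Q) (z : List σ) : Prop :=
  U ∪ L = Set.univ ∧ Disjoint U L ∧ U.Nonempty ∧ L.Nonempty ∧
  (∀ qu' ∈ U, ∀ ql ∈ L,
    (((A.lam : ℝ) ^ w.length : ℝ) : EReal) *
        (A.minVal A.init {qu'} w - A.minVal A.init {ql} w) > ((n : ℝ) : EReal)) ∧
  qu ∈ U ∧ ∀ ql ∈ L, A.RecGap w z qu ql

/-- `w` has the `n`-separation property. -/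
def SepProp (A : NDA σ Q) (n : ℚ) (w : List σ) : Prop :=
  ∃ U L qu z, A.SepPropWith n w U L qu z

end NDA

/-! Each step multiplies the normalized value by `λ` after adding a transition weight in
`[0, m_A]`: `Γ(ρ, n+1) = λ·(Γ(ρ, n) + v)`. So a gap `D` becomes at least `λ·(D - m_A)`,
which exceeds `D` as soon as `(λ - 1)·D > λ·m_A`; `D > M` gives this twice over. -/

theorem lt_mul_add_sub_of_lt {K : Type*} [Field K] [LinearOrder K] [IsStrictOrderedRing K]
    {L D a b m : K} (hL : 1 < L) (ha : 0 ≤ a) (hb : b ≤ m) (hm : 0 ≤ m)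
    (hD : 2 * (L / (L - 1)) * m < D) : D < L * (D + a - b) := by
  have hL1 : 0 < L - 1 := sub_pos.mpr hL
  have hD' : 2 * L * m < (L - 1) * D := by
    rwa [mul_div_assoc', div_mul_eq_mul_div, div_lt_iff₀ hL1, mul_comm D] at hD
  nlinarith

namespace NDA

variable {σ Q : Type} (A : NDA σ Q)

theorem runVal_append (u v : List σ) (ρ : ℕ → Q) :
    A.runVal (u ++ v) ρ =
      A.runVal u ρ + (A.lam : ℚ)⁻¹ ^ u.length * A.runVal v (fun i => ρ (u.length + i)) := by
  unfold runVal
  rw [← Fin.sum_congr' _ (List.length_append).symm, Fin.sum_univ_add, Finset.mul_sum]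
  congr 1 <;> refine Finset.sum_congr rfl fun i _ => ?_
  · simp [List.getElem_append_left]
  · simp only [Fin.val_cast, Fin.val_natAdd, List.get_eq_getElem, le_add_iff_nonneg_right,
      zero_le, List.getElem_append_right, add_tsub_cancel_left, pow_add, add_assoc]
    ring

theorem runVal_singleton (a : σ) (ρ : ℕ → Q) : A.runVal [a] ρ = A.val (ρ 0, a, ρ 1) := by
  simp [runVal]

theorem gammaPfx_succ (w : List σ) (ρ : ℕ → Q) {n : ℕ} (hn : n < w.length) :
    A.gammaPfx w ρ (n + 1) = A.lam * (A.gammaPfx w ρ n + A.val (ρ n, w[n], ρ (n + 1))) := by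
  have hlam : (A.lam : ℚ) ≠ 0 := by have := A.one_lt_lam; positivity
  have hlen : (w.take n).length = n := by simp [hn.le]
  rw [gammaPfx, gammaPfx, List.take_succ_eq_append_getElem hn, runVal_append, hlen,
    runVal_singleton, add_zero, inv_pow]
  field_simp
  ring

theorem val_le_mA [Fintype σ] [Fintype Q] {t : Q × σ × Q} (ht : t ∈ A.delta) :
    A.val t ≤ A.mA :=
  le_trans (Finset.le_sup ((Set.Finite.mem_toFinset _).mpr ht)) (le_max_left _ _)

end NDA

theorem large_gap_has_to_increase_general {σ Q : Type} [Fintype σ] [Fintype Q]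
    (A : NDA σ Q) (w : List σ) (n : ℕ) (hw : w.length = n + 1)
    (ρ1 ρ2 : ℕ → Q) (h2 : A.IsRun w ρ2)
    (hgap : A.gammaPfx w ρ1 n - A.gammaPfx w ρ2 n > A.M) :
    A.gammaPfx w ρ1 (n + 1) - A.gammaPfx w ρ2 (n + 1) >
      A.gammaPfx w ρ1 n - A.gammaPfx w ρ2 n := by
  have hn : n < w.length := by omega
  have hval : (A.val (ρ2 n, w[n], ρ2 (n + 1)) : ℚ) ≤ A.mA := by
    exact_mod_cast A.val_le_mA (h2.2 ⟨n, hn⟩)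
  have hgrow := lt_mul_add_sub_of_lt (by exact_mod_cast A.one_lt_lam)
    (Nat.cast_nonneg (A.val (ρ1 n, w[n], ρ1 (n + 1)))) hval (Nat.cast_nonneg _) hgap
  rw [A.gammaPfx_succ w ρ1 hn, A.gammaPfx_succ w ρ2 hn]
  linarith

/-- If two runs of length `n+1` have a normalized gap larger than `M` after
`n` steps, then the gap strictly increases at step `n+1`. -/
theorem large_gap_has_to_increase {σ Q : Type} [Fintype σ] [Fintype Q]
    (A : NDA σ Q) (w : List σ) (n : ℕ) (hw : w.length = n + 1)
    (ρ1 ρ2 : ℕ → Q) (h1 : A.IsRun w ρ1) (h2 : A.IsRun w ρ2)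
    (hgap : A.gammaPfx w ρ1 n - A.gammaPfx w ρ2 n > A.M) :
    A.gammaPfx w ρ1 (n + 1) - A.gammaPfx w ρ2 (n + 1) >
      A.gammaPfx w ρ1 n - A.gammaPfx w ρ2 n :=
  large_gap_has_to_increase_general A w n hw ρ1 ρ2 h2 hgap
end

section
/- Let A be an integral NDA, let ρᵘ, ρˡ be two runs of A on a word w ending in states q_u, q_l respectively with Γ(ρᵘ) − Γ(ρˡ) > M, and let ρ^{u_f}, ρ^{l_f} be accepting continuations on a word z starting in q_u and q_l and ending in accepting states q_{u_f} and q_{l_f}, respectively. Then val(ρᵘ·ρ^{u_f}) + λ^{−|wz|}·fval(q_{u_f}) > val(ρˡ·ρ^{l_f}) + λ^{−|wz|}·fval(q_{l_f}). -/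
section Aux

variable {σ Q : Type} [Fintype σ] [Fintype Q]

lemma val_le_mA (A : NDA σ Q) {t : Q × σ × Q} (ht : t ∈ A.delta) : A.val t ≤ A.mA :=
  le_trans (Finset.le_sup ((Set.toFinite A.delta).mem_toFinset.mpr ht)) (le_max_left _ _)

lemma fval_le_mA (A : NDA σ Q) {q : Q} (hq : q ∈ A.acc) : A.fval q ≤ A.mA :=
  le_trans (Finset.le_sup ((Set.toFinite A.acc).mem_toFinset.mpr hq)) (le_max_right _ _)

omit [Fintype σ] [Fintype Q] in
lemma runVal_nonneg (A : NDA σ Q) (z : List σ) (ρ : ℕ → Q) : 0 ≤ A.runVal z ρ := by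
  apply Finset.sum_nonneg
  intro i _
  positivity

lemma runVal_le (A : NDA σ Q) (z : List σ) (ρ : ℕ → Q) (h : A.Steps z ρ) :
    A.runVal z ρ ≤ (A.mA : ℚ) * ∑ i ∈ Finset.range z.length, ((A.lam : ℚ)⁻¹) ^ i := by
  have h1 : A.runVal z ρ ≤ ∑ i : Fin z.length, ((A.lam : ℚ)⁻¹) ^ (i : ℕ) * (A.mA : ℚ) := by
    apply Finset.sum_le_sum
    intro i _
    have hv : (A.val (ρ (i : ℕ), z.get i, ρ ((i : ℕ) + 1)) : ℚ) ≤ (A.mA : ℚ) := by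
      exact_mod_cast val_le_mA A (h i)
    have hx : (0 : ℚ) ≤ ((A.lam : ℚ)⁻¹) ^ (i : ℕ) := by positivity
    exact mul_le_mul_of_nonneg_left hv hx
  calc A.runVal z ρ ≤ ∑ i : Fin z.length, ((A.lam : ℚ)⁻¹) ^ (i : ℕ) * (A.mA : ℚ) := h1
    _ = (A.mA : ℚ) * ∑ i ∈ Finset.range z.length, ((A.lam : ℚ)⁻¹) ^ i := by
        rw [Fin.sum_univ_eq_sum_range (fun i => ((A.lam : ℚ)⁻¹) ^ i * (A.mA : ℚ)),
          ← Finset.sum_mul, mul_comm]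

lemma geom_bound {x : ℚ} (hx0 : 0 ≤ x) (hx1 : x < 1) (n : ℕ) :
    ∑ i ∈ Finset.range n, x ^ i ≤ (1 - x)⁻¹ := by
  have hmul := geom_sum_mul x n
  have hxn : (0 : ℚ) ≤ x ^ n := by positivity
  have h1x : (0 : ℚ) < 1 - x := by linarith
  rw [inv_eq_one_div, le_div_iff₀ h1x]
  nlinarith [hmul]

end Aux

/-- If two runs on `w` end more than `M` apart (normalized), then any accepting
continuations on `z`, including final weights, keep the upper run strictly above the lower. -/
theorem large_gap_unrecoverable_with_final_weights {σ Q : Type} [Fintype σ] [Fintype Q]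
    (A : NDA σ Q) (w z : List σ) (qu ql quf qlf : Q)
    (ρu ρl ρuf ρlf : ℕ → Q)
    (hu : A.IsRun w ρu) (hue : ρu w.length = qu)
    (hl : A.IsRun w ρl) (hle : ρl w.length = ql)
    (huf : A.IsRunFrom qu z ρuf) (hufe : ρuf z.length = quf) (hufacc : quf ∈ A.acc)
    (hlf : A.IsRunFrom ql z ρlf) (hlfe : ρlf z.length = qlf) (hlfacc : qlf ∈ A.acc)
    (hgap : A.gammaPfx w ρu w.length - A.gammaPfx w ρl w.length > A.M) :
    A.runVal w ρu + ((A.lam : ℚ)⁻¹) ^ w.length * A.runVal z ρuf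
        + ((A.lam : ℚ)⁻¹) ^ (w.length + z.length) * (A.fval quf : ℚ)
      > A.runVal w ρl + ((A.lam : ℚ)⁻¹) ^ w.length * A.runVal z ρlf
        + ((A.lam : ℚ)⁻¹) ^ (w.length + z.length) * (A.fval qlf : ℚ) := by
  obtain ⟨-, husteps⟩ := hu
  obtain ⟨-, hlsteps⟩ := hl
  obtain ⟨hq, hufsteps⟩ := huf
  obtain ⟨hq', hlfsteps⟩ := hlf
  set n := w.length with hn
  set m := z.length with hm
  set x : ℚ := ((A.lam : ℚ))⁻¹ with hxdef
  have hlam : (1 : ℚ) < (A.lam : ℚ) := by exact_mod_cast A.one_lt_lam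
  have hlam0 : (0 : ℚ) < (A.lam : ℚ) := by linarith
  have hx0 : (0 : ℚ) ≤ x := by positivity
  have hx1 : x < 1 := by
    rw [hxdef, inv_lt_one_iff₀]; right; exact hlam
  -- translate the gap hypothesis
  have hxl : x ^ n * (A.lam : ℚ) ^ n = 1 := by
    rw [hxdef, ← mul_pow, inv_mul_cancel₀ hlam0.ne', one_pow]
  have hgap0 : A.M < (A.lam : ℚ) ^ n * A.runVal w ρu - (A.lam : ℚ) ^ n * A.runVal w ρl := by
    have := hgap
    unfold NDA.gammaPfx at this
    simp only [hn, List.take_length] at this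
    rw [hn]
    linarith
  have hxn0 : (0 : ℚ) < x ^ n := by positivity
  have hgap' : x ^ n * A.M < A.runVal w ρu - A.runVal w ρl := by
    have h := mul_lt_mul_of_pos_left hgap0 hxn0
    calc x ^ n * A.M < x ^ n * ((A.lam : ℚ) ^ n * A.runVal w ρu
          - (A.lam : ℚ) ^ n * A.runVal w ρl) := h
      _ = A.runVal w ρu - A.runVal w ρl := by
          rw [mul_sub, ← mul_assoc, ← mul_assoc, hxl, one_mul, one_mul]
  -- bound the lower continuation by M
  have hmA0 : (0 : ℚ) ≤ (A.mA : ℚ) := Nat.cast_nonneg _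
  have hxm0 : (0 : ℚ) ≤ x ^ m := by positivity
  have hfL : (A.fval qlf : ℚ) ≤ (A.mA : ℚ) := by exact_mod_cast fval_le_mA A hlfacc
  have hRL : A.runVal z ρlf ≤ (A.mA : ℚ) * ∑ i ∈ Finset.range m, x ^ i :=
    runVal_le A z ρlf hlfsteps
  have hgeom : ∑ i ∈ Finset.range (m + 1), x ^ i ≤ (1 - x)⁻¹ := geom_bound hx0 hx1 (m + 1)
  have hsum : ∑ i ∈ Finset.range (m + 1), x ^ i
      = (∑ i ∈ Finset.range m, x ^ i) + x ^ m := Finset.sum_range_succ _ m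
  have hgeom2 : (A.mA : ℚ) * ((∑ i ∈ Finset.range m, x ^ i) + x ^ m)
      ≤ (A.mA : ℚ) * (1 - x)⁻¹ := by
    apply mul_le_mul_of_nonneg_left _ hmA0
    rw [← hsum]; exact hgeom
  have hinv : (1 - x)⁻¹ = (A.lam : ℚ) / ((A.lam : ℚ) - 1) := by
    have h1 : (A.lam : ℚ) ≠ 0 := hlam0.ne'
    have h2 : 1 - (A.lam : ℚ)⁻¹ = ((A.lam : ℚ) - 1) / (A.lam : ℚ) := by field_simp
    rw [hxdef, h2, inv_div]
  have hinv0 : (0 : ℚ) ≤ (1 - x)⁻¹ := by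
    have : (0 : ℚ) < 1 - x := by linarith
    positivity
  have hMeq : A.M = 2 * ((1 - x)⁻¹) * (A.mA : ℚ) := by
    unfold NDA.M; rw [hinv]
  have hboundL : A.runVal z ρlf + x ^ m * (A.fval qlf : ℚ) ≤ A.M := by
    have h1 : x ^ m * (A.fval qlf : ℚ) ≤ x ^ m * (A.mA : ℚ) :=
      mul_le_mul_of_nonneg_left hfL hxm0
    nlinarith [hgeom2, mul_nonneg hinv0 hmA0]
  -- upper continuation is nonnegative
  have hU0 : (0 : ℚ) ≤ A.runVal z ρuf := runVal_nonneg A z ρuf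
  have hfU0 : (0 : ℚ) ≤ (A.fval quf : ℚ) := Nat.cast_nonneg _
  -- assemble
  have hA : x ^ n * (A.runVal z ρlf + x ^ m * (A.fval qlf : ℚ)) ≤ x ^ n * A.M :=
    mul_le_mul_of_nonneg_left hboundL hxn0.le
  have hB : (0 : ℚ) ≤ x ^ n * (A.runVal z ρuf + x ^ m * (A.fval quf : ℚ)) := by positivity
  rw [pow_add]
  nlinarith [hA, hB, hgap']
end
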